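/- arXiv:1511.01789 — 9 statements merged into one kernel-verified Lean document; each statement's English description precedes it below -/
import Mathlib

section
/- For every natural number J, the number of natural numbers n with 1 ≤ n ≤ 2·10^J whose leading (most significant) decimal digit is 1 is at least 10^J, i.e. at least half of all such n. -/
open scoped Classical

theorem Ico_pow_subset_filter_leading_one {b : ℕ} (hb : 0 < b) (J : ℕ) :
    Finset.Ico (b ^ J) (2 * b ^ J) ⊆ (Finset.Icc 1 (2 * b ^ J)).filter
      (fun n => ∃ j : ℕ, b ^ j ≤ n ∧ n < 2 * b ^ j) := by
  intro n hn
  obtain ⟨hlo, hhi⟩ := Finset.mem_Ico.mp hn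
  have hpos : 1 ≤ b ^ J := Nat.one_le_pow _ _ hb
  simp only [Finset.mem_filter, Finset.mem_Icc]
  exact ⟨⟨hpos.trans hlo, hhi.le⟩, J, hlo, hhi⟩

/-- For every natural `J`, at least `10^J` of the numbers `1 ≤ n ≤ 2·10^J`
have leading decimal digit `1`, i.e. `10^j ≤ n < 2·10^j` for some `j`. -/
theorem stmt0 (J : ℕ) :
    10 ^ J ≤ ((Finset.Icc 1 (2 * 10 ^ J)).filter
      (fun n => ∃ j : ℕ, 10 ^ j ≤ n ∧ n < 2 * 10 ^ j)).card := by
  calc 10 ^ J = (Finset.Ico (10 ^ J) (2 * 10 ^ J)).card := by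
        rw [Nat.card_Ico]; omega
    _ ≤ _ := Finset.card_le_card (Ico_pow_subset_filter_leading_one (by norm_num) J)
end

section
/- Let x_n = 0.(n)(n+1)(n+2)... be the real number in [0,1) obtained by concatenating the decimal expansions of n, n+1, n+2, ... after the decimal point. Then the sequence (x_n) is not uniformly distributed over [0.1, 1): specifically, limsup_{N→∞} (1/N)·#{n ≤ N : x_n ∈ [0.1, 0.2)} ≥ 1/2 > 1/9. -/
open scoped Classical
open Filter

/-- Number of decimal digits of `m`. -/
def numDigits (m : ℕ) : ℕ := (Nat.digits 10 m).length

/-- The natural number obtained by concatenating the decimal expansions of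
`a 0, a 1, …, a K`. -/
def concatBlock (a : ℕ → ℕ) : ℕ → ℕ
  | 0 => a 0
  | K + 1 => concatBlock a K * 10 ^ numDigits (a (K + 1)) + a (K + 1)

/-- The total number of decimal digits of `a 0, a 1, …, a K`. -/
def totalDigits (a : ℕ → ℕ) : ℕ → ℕ
  | 0 => numDigits (a 0)
  | K + 1 => totalDigits a K + numDigits (a (K + 1))

/-- The real number `0.(a 0)(a 1)(a 2)…` obtained by concatenating the decimal
expansions of `a 0, a 1, a 2, …` after the decimal point. -/
noncomputable def concatReal (a : ℕ → ℕ) : ℝ :=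
  ⨆ K : ℕ, (concatBlock a K : ℝ) / 10 ^ totalDigits a K

/-- `x` is uniformly distributed mod 1 over `[α, β)`. -/
def UDOver (x : ℕ → ℝ) (α β : ℝ) : Prop :=
  ∀ a b : ℝ, α ≤ a → a < b → b ≤ β →
    Filter.Tendsto
      (fun N : ℕ => (((Finset.Icc 1 N).filter (fun n => x n ∈ Set.Ico a b)).card : ℝ) / N)
      Filter.atTop (nhds ((b - a) / (β - α)))

/-!
If the leading digit of `n` is `1`, say `10^k ≤ n < 2·10^k`, then `x_n` starts with the digits
of `n`, so `0.1 ≤ x_n < 0.2` (strictly, because `n + 1` is not a string of nines and hence does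
not carry into `n`). Thus at `N = 2·10^k - 1` at least `10^k` of the first `N` terms lie in
`[0.1, 0.2)`, a proportion above `1/2`, while uniform distribution would force `1/9`.
-/

lemma lt_pow_numDigits (m : ℕ) : m < 10 ^ numDigits m :=
  Nat.lt_base_pow_length_digits (by norm_num)

lemma pow_numDigits_le {m : ℕ} (hm : m ≠ 0) : 10 ^ numDigits m ≤ 10 * m :=
  Nat.base_pow_length_digits_le 10 m (by norm_num) hm

lemma pow_succ_le_pow_numDigits {k m : ℕ} (h : 10 ^ k ≤ m) :
    10 ^ (k + 1) ≤ 10 ^ numDigits m :=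
  Nat.pow_le_pow_right (by norm_num)
    ((Nat.pow_lt_pow_iff_right (by norm_num)).mp (h.trans_lt (lt_pow_numDigits m)))

section ConcatReal

variable (a : ℕ → ℕ)

lemma concatBlock_succ_div (K : ℕ) :
    (concatBlock a (K + 1) : ℝ) / 10 ^ totalDigits a (K + 1)
      = (concatBlock a K : ℝ) / 10 ^ totalDigits a K
        + (a (K + 1) : ℝ) / 10 ^ totalDigits a (K + 1) := by
  simp only [concatBlock, totalDigits, pow_add]
  push_cast
  field_simp

lemma monotone_concatBlock_div :
    Monotone fun K => (concatBlock a K : ℝ) / 10 ^ totalDigits a K := by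
  refine monotone_nat_of_le_succ fun K => ?_
  rw [concatBlock_succ_div]
  exact le_add_of_nonneg_right (by positivity)

lemma antitone_concatBlock_succ_div :
    Antitone fun K => ((concatBlock a K : ℝ) + 1) / 10 ^ totalDigits a K := by
  refine antitone_nat_of_succ_le fun K => ?_
  have hdigits : (a (K + 1) : ℝ) + 1 ≤ 10 ^ numDigits (a (K + 1)) := by
    exact_mod_cast lt_pow_numDigits (a (K + 1))
  calc ((concatBlock a (K + 1) : ℝ) + 1) / 10 ^ totalDigits a (K + 1)
      = (concatBlock a K : ℝ) / 10 ^ totalDigits a K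
          + ((a (K + 1) : ℝ) + 1) / 10 ^ totalDigits a (K + 1) := by
        rw [add_div, concatBlock_succ_div, add_assoc, ← add_div]
    _ ≤ (concatBlock a K : ℝ) / 10 ^ totalDigits a K
          + 10 ^ numDigits (a (K + 1)) / 10 ^ totalDigits a (K + 1) := by gcongr
    _ = ((concatBlock a K : ℝ) + 1) / 10 ^ totalDigits a K := by
        simp only [totalDigits, pow_add]
        field_simp

lemma concatBlock_div_le_succ_div (J K : ℕ) :
    (concatBlock a K : ℝ) / 10 ^ totalDigits a K
      ≤ ((concatBlock a J : ℝ) + 1) / 10 ^ totalDigits a J := by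
  rcases le_total J K with hJK | hKJ
  · calc (concatBlock a K : ℝ) / 10 ^ totalDigits a K
        ≤ ((concatBlock a K : ℝ) + 1) / 10 ^ totalDigits a K := by gcongr; linarith
      _ ≤ ((concatBlock a J : ℝ) + 1) / 10 ^ totalDigits a J :=
        antitone_concatBlock_succ_div a hJK
  · calc (concatBlock a K : ℝ) / 10 ^ totalDigits a K
        ≤ (concatBlock a J : ℝ) / 10 ^ totalDigits a J := monotone_concatBlock_div a hKJ
      _ ≤ ((concatBlock a J : ℝ) + 1) / 10 ^ totalDigits a J := by gcongr; linarith

lemma concatBlock_div_le_concatReal (J : ℕ) :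
    (concatBlock a J : ℝ) / 10 ^ totalDigits a J ≤ concatReal a :=
  le_ciSup ⟨_, Set.forall_mem_range.mpr (concatBlock_div_le_succ_div a 0)⟩ J

lemma concatReal_le_succ_div (J : ℕ) :
    concatReal a ≤ ((concatBlock a J : ℝ) + 1) / 10 ^ totalDigits a J :=
  ciSup_le (concatBlock_div_le_succ_div a J)

lemma concatReal_lt_of_succ_lt_pow (h : a 1 + 1 < 10 ^ numDigits (a 1)) :
    concatReal a < ((a 0 : ℝ) + 1) / 10 ^ numDigits (a 0) := by
  have h' : (a 1 : ℝ) + 1 + 1 ≤ 10 ^ numDigits (a 1) := by exact_mod_cast h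
  calc concatReal a ≤ ((concatBlock a 1 : ℝ) + 1) / 10 ^ totalDigits a 1 :=
        concatReal_le_succ_div a 1
    _ = (a 0 * 10 ^ numDigits (a 1) + (a 1 + 1) : ℝ)
          / (10 ^ numDigits (a 0) * 10 ^ numDigits (a 1)) := by
        simp only [concatBlock, totalDigits, pow_add]
        push_cast
        ring
    _ < (a 0 * 10 ^ numDigits (a 1) + 10 ^ numDigits (a 1) : ℝ)
          / (10 ^ numDigits (a 0) * 10 ^ numDigits (a 1)) := by gcongr; linarith
    _ = ((a 0 : ℝ) + 1) / 10 ^ numDigits (a 0) := by field_simp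

end ConcatReal

lemma concatReal_mem_Ico_of_leading_digit_one {n k : ℕ} (hlo : 10 ^ k ≤ n)
    (hhi : n < 2 * 10 ^ k) : concatReal (fun i => n + i) ∈ Set.Ico (0.1 : ℝ) 0.2 := by
  have hn : n ≠ 0 := by have := Nat.one_le_pow k 10 (by norm_num); omega
  have hsucc : n + 1 + 1 < 10 ^ numDigits (n + 1) := by
    have := pow_succ_le_pow_numDigits (hlo.trans (Nat.le_add_right n 1))
    rw [pow_succ] at this; omega
  have hpow_le : (10 : ℝ) ^ numDigits n ≤ 10 * n := by exact_mod_cast pow_numDigits_le hn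
  have hpow_ge : (10 : ℝ) * 10 ^ k ≤ 10 ^ numDigits n := by
    have := pow_succ_le_pow_numDigits hlo
    rw [pow_succ, mul_comm] at this; exact_mod_cast this
  have hhi' : (n : ℝ) + 1 ≤ 2 * 10 ^ k := by exact_mod_cast hhi
  constructor
  · refine le_trans ?_ (concatBlock_div_le_concatReal _ 0)
    simp only [concatBlock, totalDigits, add_zero]
    rw [le_div_iff₀ (by positivity)]
    linarith
  · refine (concatReal_lt_of_succ_lt_pow _ hsucc).trans_le ?_
    simp only [add_zero]
    rw [div_le_iff₀ (by positivity)]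
    linarith

section Density

variable {p : ℕ → Prop} [DecidablePred p]

lemma card_filter_Icc_div_le_one (N : ℕ) : (((Finset.Icc 1 N).filter p).card : ℝ) / N ≤ 1 := by
  refine div_le_one_of_le₀ ?_ N.cast_nonneg
  exact_mod_cast (Finset.card_filter_le _ _).trans (by simp)

lemma half_le_card_filter_div {m : ℕ} (hm : 1 ≤ m) (hp : ∀ n ∈ Set.Ico m (2 * m), p n) :
    1 / 2 ≤ (((Finset.Icc 1 (2 * m - 1)).filter p).card : ℝ) / (2 * m - 1 : ℕ) := by
  have hsub : Finset.Ico m (2 * m) ⊆ (Finset.Icc 1 (2 * m - 1)).filter p := fun n hn => by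
    rw [Finset.mem_Ico] at hn
    rw [Finset.mem_filter, Finset.mem_Icc]
    exact ⟨⟨by omega, by omega⟩, hp n (Set.mem_Ico.mpr hn)⟩
  have hcard : (m : ℝ) ≤ ((Finset.Icc 1 (2 * m - 1)).filter p).card := by
    have := Finset.card_le_card hsub
    rw [Nat.card_Ico, show 2 * m - m = m by omega] at this
    exact_mod_cast this
  have hN : ((2 * m - 1 : ℕ) : ℝ) = 2 * m - 1 := by
    rw [Nat.cast_sub (by omega)]; push_cast; ring
  have hm' : (1 : ℝ) ≤ m := by exact_mod_cast hm
  rw [hN, le_div_iff₀ (by linarith)]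
  linarith

lemma half_le_limsup_density (hp : ∃ᶠ m in atTop, ∀ n ∈ Set.Ico m (2 * m), p n) :
    1 / 2 ≤ limsup (fun N : ℕ => (((Finset.Icc 1 N).filter p).card : ℝ) / N) atTop := by
  refine le_limsup_of_frequently_le ?_ (isBoundedUnder_of ⟨1, card_filter_Icc_div_le_one⟩)
  rw [frequently_atTop] at hp ⊢
  intro M
  obtain ⟨m, hm, hpm⟩ := hp (M + 1)
  exact ⟨2 * m - 1, by omega, half_le_card_filter_div (by omega) hpm⟩

end Density

/-- With `x n = 0.(n)(n+1)(n+2)…`, the proportion of `n ≤ N` with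
`x n ∈ [0.1, 0.2)` has limsup at least `1/2 > 1/9`; hence `(x n)` is not
uniformly distributed mod 1 over `[0.1, 1)`. -/
theorem stmt1 :
    (1 / 2 : ℝ) ≤ Filter.limsup
      (fun N : ℕ => (((Finset.Icc 1 N).filter
        (fun n => concatReal (fun i => n + i) ∈ Set.Ico (0.1 : ℝ) 0.2)).card : ℝ) / N)
      Filter.atTop
    ∧ (1 / 2 : ℝ) > 1 / 9
    ∧ ¬ UDOver (fun n => concatReal (fun i => n + i)) 0.1 1 := by
  have hleading : ∃ᶠ m in atTop,
      ∀ n ∈ Set.Ico m (2 * m), concatReal (fun i => n + i) ∈ Set.Ico (0.1 : ℝ) 0.2 :=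
    frequently_atTop.mpr fun M => ⟨10 ^ M, (Nat.lt_pow_self (by norm_num)).le,
      fun _ hn => concatReal_mem_Ico_of_leading_digit_one hn.1 hn.2⟩
  have hlimsup := half_le_limsup_density hleading
  refine ⟨hlimsup, by norm_num, fun hud => ?_⟩
  rw [(hud 0.1 0.2 le_rfl (by norm_num) (by norm_num)).limsup_eq] at hlimsup
  norm_num at hlimsup
end

section
/- Fix a natural number k ≥ 1. With n_J = ⌊2·10^J / k⌋, one has limsup_{J→∞} (1/n_J)·#{n ≤ n_J : kn has leading decimal digit 1} ≥ 5/9. -/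
/-!
For each `j ≤ J`, the `n` with `10 ^ j ≤ k n < 2 · 10 ^ j` form an interval of at least
`10 ^ j / k - 1` integers, all of them `≤ n_J`, and these intervals are disjoint. Summing the
geometric series, at least `(10 ^ (J + 1) - 1) / (9k) - (J + 1)` of the `n ≤ n_J` qualify, while
`n_J ≤ 2 · 10 ^ J / k`, so the proportion is at least a quantity tending to `(10 / 9) / 2 = 5 / 9`.
-/

open scoped Classical
open Filter Finset

lemma mem_Ico_ceil_div_iff {a b k : ℝ} (hk : 0 < k) (n : ℕ) :
    n ∈ Ico ⌈a / k⌉₊ ⌈b / k⌉₊ ↔ a ≤ k * n ∧ k * n < b := by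
  rw [mem_Ico, Nat.ceil_le, Nat.lt_ceil, div_le_iff₀ hk, lt_div_iff₀ hk, mul_comm k]

lemma sub_sub_one_le_card_Ico_ceil {x : ℝ} (hx : 0 ≤ x) (y : ℝ) :
    y - x - 1 ≤ #(Ico ⌈x⌉₊ ⌈y⌉₊) := by
  have hcard : (⌈y⌉₊ : ℝ) ≤ #(Ico ⌈x⌉₊ ⌈y⌉₊) + ⌈x⌉₊ := by
    rw [Nat.card_Ico]; exact_mod_cast le_tsub_add
  linarith [Nat.le_ceil y, Nat.ceil_lt_add_one hx]

lemma card_filter_Icc_one_le (N : ℕ) (p : ℕ → Prop) [DecidablePred p] :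
    #((Icc 1 N).filter p) ≤ N :=
  (card_filter_le _ _).trans (by simp)

lemma div_le_div_of_le_of_le_of_le {L c N D : ℝ} (hc : 0 ≤ c) (hLc : L ≤ c) (hcN : c ≤ N)
    (hND : N ≤ D) (hD : 0 < D) : L / D ≤ c / N := by
  rcases le_or_gt L 0 with hL | hL
  · exact (div_nonpos_of_nonpos_of_nonneg hL hD.le).trans (div_nonneg hc (hc.trans hcN))
  · have hN : 0 < N := by linarith
    calc L / D ≤ L / N := div_le_div_of_nonneg_left hL.le hN hND
      _ ≤ c / N := by gcongr

lemma log_eq_of_leading_digit_one {m j : ℕ} (h₁ : 10 ^ j ≤ m) (h₂ : m < 2 * 10 ^ j) :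
    Nat.log 10 m = j :=
  Nat.log_eq_of_pow_le_of_lt_pow h₁ (by rw [pow_succ]; omega)

theorem card_leading_digit_one_ge (k J : ℕ) (hk : 0 < k) :
    ((10 : ℝ) ^ (J + 1) - 1) / (9 * k) - (J + 1) ≤
      #((Icc 1 (2 * 10 ^ J / k)).filter
          (fun n => ∃ j : ℕ, 10 ^ j ≤ k * n ∧ k * n < 2 * 10 ^ j)) := by
  have hk' : (0 : ℝ) < k := by exact_mod_cast hk
  set t : ℕ → Finset ℕ := fun j => Ico ⌈(10 ^ j : ℕ) / (k : ℝ)⌉₊ ⌈(2 * 10 ^ j : ℕ) / (k : ℝ)⌉₊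
  have mem_t (j n : ℕ) : n ∈ t j ↔ 10 ^ j ≤ k * n ∧ k * n < 2 * 10 ^ j := by
    rw [mem_Ico_ceil_div_iff hk']; norm_cast
  have hsub : (range (J + 1)).biUnion t ⊆ (Icc 1 (2 * 10 ^ J / k)).filter
      (fun n => ∃ j : ℕ, 10 ^ j ≤ k * n ∧ k * n < 2 * 10 ^ j) := by
    intro n hn
    obtain ⟨j, hj, hnj⟩ := mem_biUnion.1 hn
    obtain ⟨hlo, hhi⟩ := (mem_t j n).1 hnj
    have hjJ : 10 ^ j ≤ 10 ^ J :=
      Nat.pow_le_pow_right (by norm_num) (Nat.lt_succ_iff.1 (mem_range.1 hj))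
    refine mem_filter.2 ⟨mem_Icc.2 ⟨?_, (Nat.le_div_iff_mul_le hk).2 ?_⟩, j, hlo, hhi⟩
    · exact Nat.pos_of_ne_zero (by rintro rfl; simp at hlo)
    · rw [mul_comm]; omega
  have hdisj : (range (J + 1) : Set ℕ).PairwiseDisjoint t := by
    intro i _ j _ hij
    refine disjoint_left.2 fun n hi hj => hij ?_
    obtain ⟨hi₁, hi₂⟩ := (mem_t i n).1 hi
    obtain ⟨hj₁, hj₂⟩ := (mem_t j n).1 hj
    rw [← log_eq_of_leading_digit_one hi₁ hi₂, log_eq_of_leading_digit_one hj₁ hj₂]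
  have hblock (j : ℕ) : (10 : ℝ) ^ j / k - 1 ≤ #(t j) := by
    calc (10 : ℝ) ^ j / k - 1 = ((2 * 10 ^ j : ℕ) : ℝ) / k - ((10 ^ j : ℕ) : ℝ) / k - 1 := by
          push_cast; ring
      _ ≤ #(t j) := sub_sub_one_le_card_Ico_ceil (by positivity) _
  calc ((10 : ℝ) ^ (J + 1) - 1) / (9 * k) - (J + 1)
      = ∑ j ∈ range (J + 1), ((10 : ℝ) ^ j / k - 1) := by
        rw [sum_sub_distrib, ← sum_div, geom_sum_eq (by norm_num : (10 : ℝ) ≠ 1)]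
        simp only [sum_const, card_range, nsmul_eq_mul, mul_one, Nat.cast_add, Nat.cast_one]
        ring
    _ ≤ ∑ j ∈ range (J + 1), (#(t j) : ℝ) := sum_le_sum fun j _ => hblock j
    _ = #((range (J + 1)).biUnion t) := by rw [card_biUnion hdisj]; push_cast; rfl
    _ ≤ _ := by exact_mod_cast card_le_card hsub

lemma tendsto_leading_digit_one_lower_bound {k : ℝ} (hk : k ≠ 0) :
    Tendsto (fun J : ℕ => (((10 : ℝ) ^ (J + 1) - 1) / (9 * k) - (J + 1)) / (2 * 10 ^ J / k))
      atTop (nhds (5 / 9)) := by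
  have hr := tendsto_pow_atTop_nhds_zero_of_lt_one (by norm_num : (0 : ℝ) ≤ 1 / 10) (by norm_num)
  have hJr := tendsto_self_mul_const_pow_of_lt_one (by norm_num : (0 : ℝ) ≤ 1 / 10) (by norm_num)
  have hlim := ((tendsto_const_nhds (x := (5 / 9 : ℝ))).sub
    ((hr.const_mul (1 / 18 + k / 2)).add (hJr.const_mul (k / 2))))
  rw [mul_zero, mul_zero, add_zero, sub_zero] at hlim
  refine hlim.congr fun J => ?_
  rw [div_pow, one_pow]
  field_simp
  ring

theorem leading_digit_one_ratio_ge (k J : ℕ) (hk : 0 < k) :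
    (((10 : ℝ) ^ (J + 1) - 1) / (9 * k) - (J + 1)) / (2 * 10 ^ J / k) ≤
      #((Icc 1 (2 * 10 ^ J / k)).filter
          (fun n => ∃ j : ℕ, 10 ^ j ≤ k * n ∧ k * n < 2 * 10 ^ j)) / ((2 * 10 ^ J / k : ℕ) : ℝ) :=
  div_le_div_of_le_of_le_of_le (Nat.cast_nonneg _) (card_leading_digit_one_ge k J hk)
    (by exact_mod_cast card_filter_Icc_one_le _ _) (by exact_mod_cast Nat.cast_div_le)
    (by positivity)

/-- For fixed `k ≥ 1` and `n_J = ⌊2·10^J/k⌋`, the limsup over `J` of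
the proportion of `n ≤ n_J` for which `k·n` has leading decimal digit `1`
is at least `5/9`. -/
theorem stmt3 (k : ℕ) (hk : 1 ≤ k) :
    (5 / 9 : ℝ) ≤ Filter.limsup
      (fun J : ℕ =>
        (((Finset.Icc 1 (2 * 10 ^ J / k)).filter
            (fun n => ∃ j : ℕ, 10 ^ j ≤ k * n ∧ k * n < 2 * 10 ^ j)).card : ℝ)
          / ((2 * 10 ^ J / k : ℕ) : ℝ))
      Filter.atTop := by
  have hlim := tendsto_leading_digit_one_lower_bound (k := k) (by positivity)
  rw [← hlim.limsup_eq]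
  refine limsup_le_limsup (Eventually.of_forall fun J => leading_digit_one_ratio_ge k J hk)
    hlim.isBoundedUnder_ge.isCoboundedUnder_le
    (isBoundedUnder_of ⟨1, fun J => div_le_one_of_le₀ ?_ (Nat.cast_nonneg _)⟩)
  exact_mod_cast card_filter_Icc_one_le _ _
end

section
/- Fix k ∈ ℕ, k ≥ 1, and define x_n = 0.(kn)(k(n+1))(k(n+2))... ∈ [0,1) by concatenating the decimal expansions of kn, k(n+1), k(n+2), .... Then (x_n) is not uniformly distributed mod 1 over [0.1, 1). -/
open scoped Classical
open Filter

lemma numDigits_eq_succ {m M : ℕ} (h₁ : 10 ^ M ≤ m) (h₂ : m < 10 ^ (M + 1)) :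
    numDigits m = M + 1 :=
  le_antisymm ((Nat.digits_length_le_iff (by norm_num) m).2 h₂)
    ((Nat.lt_digits_length_iff (by norm_num) m).2 h₁)

lemma concatBlock_succ_mul_pow_le (a : ℕ → ℕ) (K : ℕ) :
    (concatBlock a K + 1) * 10 ^ numDigits (a 0) ≤ (a 0 + 1) * 10 ^ totalDigits a K := by
  induction K with
  | zero => rfl
  | succ K ih =>
    have hlast := lt_pow_numDigits (a (K + 1))
    calc (concatBlock a (K + 1) + 1) * 10 ^ numDigits (a 0)
        ≤ (concatBlock a K + 1) * 10 ^ numDigits (a 0) * 10 ^ numDigits (a (K + 1)) := by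
          rw [concatBlock, mul_right_comm]
          gcongr
          nlinarith
      _ ≤ (a 0 + 1) * 10 ^ totalDigits a K * 10 ^ numDigits (a (K + 1)) := by gcongr
      _ = (a 0 + 1) * 10 ^ totalDigits a (K + 1) := by rw [totalDigits, pow_add, mul_assoc]

lemma concatBlock_div_le (a : ℕ → ℕ) (K : ℕ) :
    (concatBlock a K : ℝ) / 10 ^ totalDigits a K ≤ (a 0 + 1 : ℝ) / 10 ^ numDigits (a 0) := by
  rw [div_le_div_iff₀ (by positivity) (by positivity)]
  have h : ((concatBlock a K + 1 : ℕ) : ℝ) * 10 ^ numDigits (a 0)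
      ≤ ((a 0 + 1 : ℕ) : ℝ) * 10 ^ totalDigits a K := by
    exact_mod_cast concatBlock_succ_mul_pow_le a K
  push_cast at h
  nlinarith [pow_pos (show (0 : ℝ) < 10 by norm_num) (numDigits (a 0))]

lemma concatReal_le (a : ℕ → ℕ) : concatReal a ≤ (a 0 + 1 : ℝ) / 10 ^ numDigits (a 0) :=
  ciSup_le (concatBlock_div_le a)

lemma le_concatReal (a : ℕ → ℕ) : (a 0 : ℝ) / 10 ^ numDigits (a 0) ≤ concatReal a :=
  le_ciSup (f := fun K => (concatBlock a K : ℝ) / 10 ^ totalDigits a K)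
    ⟨_, Set.forall_mem_range.2 (concatBlock_div_le a)⟩ 0

lemma concatReal_mem_Ico_of_pow_le {a : ℕ → ℕ} {M : ℕ} (h₁ : 10 ^ M ≤ a 0)
    (h₂ : a 0 + 2 ≤ 2 * 10 ^ M) : concatReal a ∈ Set.Ico (0.1 : ℝ) 0.2 := by
  have hd : numDigits (a 0) = M + 1 := numDigits_eq_succ h₁ (by rw [pow_succ]; omega)
  have h₁' : (10 : ℝ) ^ M ≤ a 0 := by exact_mod_cast h₁
  have h₂' : (a 0 : ℝ) + 2 ≤ 2 * 10 ^ M := by exact_mod_cast h₂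
  have hlow := le_concatReal a
  have hup := concatReal_le a
  rw [hd, pow_succ] at hlow hup
  constructor
  · calc (0.1 : ℝ) ≤ a 0 / (10 ^ M * 10) := by
          rw [le_div_iff₀ (by positivity)]; linarith
      _ ≤ concatReal a := hlow
  · calc concatReal a ≤ (a 0 + 1) / (10 ^ M * 10) := hup
      _ < 0.2 := by rw [div_lt_iff₀ (by positivity)]; linarith

lemma concatReal_mul_add_mem_Ico {k M n : ℕ} (hk : 0 < k)
    (hn : n ∈ Finset.Ioc (10 ^ M / k) ((2 * 10 ^ M - 2) / k)) :
    concatReal (fun i => k * (n + i)) ∈ Set.Ico (0.1 : ℝ) 0.2 := by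
  obtain ⟨hlo, hhi⟩ := Finset.mem_Ioc.1 hn
  have hlo' : 10 ^ M < k * n := mul_comm n k ▸ (Nat.div_lt_iff_lt_mul hk).1 hlo
  have hhi' : k * n ≤ 2 * 10 ^ M - 2 := mul_comm n k ▸ (Nat.le_div_iff_mul_le hk).1 hhi
  refine concatReal_mem_Ico_of_pow_le (M := M) ?_ ?_ <;> simp only [add_zero] <;> omega

lemma three_mul_div_le_ten_mul_sub_div {k P : ℕ} (hk : 0 < k) (hP : 4 * k + 4 ≤ P) :
    3 * ((2 * P - 2) / k) ≤ 10 * ((2 * P - 2) / k - P / k) := by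
  have hN : 2 * P - 2 < (2 * P - 2) / k * k + k := by
    have := Nat.lt_mul_div_succ (2 * P - 2) hk
    rw [mul_add, mul_one] at this
    linarith [mul_comm k ((2 * P - 2) / k)]
  have hr := Nat.div_mul_le_self P k
  have h : 10 * (P / k) * k ≤ 7 * ((2 * P - 2) / k) * k := by
    rw [mul_assoc, mul_assoc]; omega
  have := Nat.le_of_mul_le_mul_right h hk
  omega

lemma frequently_three_tenths_le_card_leading_one {k : ℕ} (hk : 0 < k) :
    ∃ᶠ N in atTop, (3 / 10 : ℝ) ≤
      (((Finset.Icc 1 N).filter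
        (fun n => concatReal (fun i => k * (n + i)) ∈ Set.Ico (0.1 : ℝ) 0.2)).card : ℝ) / N := by
  refine frequently_atTop.2 fun N₀ => ?_
  set M := k * (N₀ + 8)
  have hP : N₀ * k + 8 * k < 10 ^ M :=
    calc N₀ * k + 8 * k = M := by ring
      _ < 10 ^ M := Nat.lt_pow_self (by norm_num)
  set N := (2 * 10 ^ M - 2) / k
  have hN₀ : N₀ ≤ N := (Nat.le_div_iff_mul_le hk).2 (by omega)
  have hN : 0 < N := (Nat.le_div_iff_mul_le hk).2 (by omega)
  have hsub : Finset.Ioc (10 ^ M / k) N ⊆ (Finset.Icc 1 N).filter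
      (fun n => concatReal (fun i => k * (n + i)) ∈ Set.Ico (0.1 : ℝ) 0.2) := by
    intro n hn
    refine Finset.mem_filter.2 ⟨?_, concatReal_mul_add_mem_Ico hk hn⟩
    rw [Finset.mem_Ioc] at hn
    exact Finset.mem_Icc.2 ⟨(Nat.zero_le _).trans_lt hn.1, hn.2⟩
  have hcard : 3 * N ≤ 10 * _ := (three_mul_div_le_ten_mul_sub_div hk (by omega)).trans
    (Nat.mul_le_mul_left 10 ((Nat.card_Ioc _ _).symm.trans_le (Finset.card_le_card hsub)))
  refine ⟨N, hN₀, ?_⟩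
  rw [le_div_iff₀ (by exact_mod_cast hN)]
  have := Nat.cast_le (α := ℝ) |>.2 hcard
  push_cast at this
  linarith

/-- For `k ≥ 1`, the sequence `x n = 0.(kn)(k(n+1))(k(n+2))…` is not
uniformly distributed mod 1 over `[0.1, 1)`. -/
theorem stmt4 (k : ℕ) (hk : 1 ≤ k) :
    ¬ UDOver (fun n => concatReal (fun i => k * (n + i))) 0.1 1 := by
  intro h
  have hlim := h 0.1 0.2 le_rfl (by norm_num) (by norm_num)
  have hsmall := hlim.eventually_lt_const (show (0.2 - 0.1) / (1 - 0.1) < (3 / 10 : ℝ) by norm_num)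
  obtain ⟨N, hlt, hge⟩ :=
    (hsmall.and_frequently (frequently_three_tenths_le_card_leading_one hk)).exists
  exact hge.not_gt hlt
end

section
/- Let f be a strictly increasing polynomial of degree d ≥ 1 with positive leading coefficient c_d, mapping ℕ into ℕ. For J ∈ ℕ, the number of n ∈ ℕ with f(n) ≤ 2·10^J and f(n) having leading decimal digit 1 equals ((2^{1/d} − 1)/c_d^{1/d}) · ∑_{i=1}^{J} 10^{i/d} + O(J). -/
/-!
Let `c` and `d` be the leading coefficient and the degree of `f`. The lower-order terms of `f` are
`O(x ^ (d - 1))`, so `c (x - C) ^ d ≤ f x < c (x + C) ^ d` for a constant `C`. Hence, when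
`c t ^ d = m`, the number of `n` with `F n < m` is `t + O(1)`, and the block of `n` with
`10 ^ j ≤ F n < 2 · 10 ^ j` has `(2 ^ (1 / d) - 1) · 10 ^ (j / d) / c ^ (1 / d) + O(1)` elements.
Leading digit `1` together with `F n ≤ 2 · 10 ^ J` means lying in exactly one block with `j ≤ J`,
and summing the `J + 1` bounded errors gives `O(J)`.
-/

open scoped Classical
open Filter Finset Polynomial

lemma sub_mul_pow_pred_le_pow_sub_pow {R : Type*} [CommRing R] [LinearOrder R]
    [IsStrictOrderedRing R] {a b : R} {d : ℕ} (hd : 1 ≤ d) (hb : 0 ≤ b) (hab : b ≤ a) :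
    (a - b) * a ^ (d - 1) ≤ a ^ d - b ^ d := by
  obtain ⟨k, rfl⟩ : ∃ k, d = k + 1 := ⟨d - 1, by omega⟩
  have : b * b ^ k ≤ b * a ^ k := mul_le_mul_of_nonneg_left (pow_le_pow_left₀ hb hab k) hb
  simp only [add_tsub_cancel_right, pow_succ']
  linarith

namespace Polynomial

lemma abs_eval_le_of_natDegree_le {p : ℝ[X]} {e : ℕ} (he : p.natDegree ≤ e) {x : ℝ}
    (hx : 0 ≤ x) :
    |p.eval x| ≤ (∑ i ∈ range (p.natDegree + 1), |p.coeff i|) * (x + 1) ^ e := by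
  rw [eval_eq_sum_range, sum_mul]
  refine (abs_sum_le_sum_abs _ _).trans (sum_le_sum fun i hi => ?_)
  rw [abs_mul, abs_pow, abs_of_nonneg hx]
  gcongr
  calc x ^ i ≤ (x + 1) ^ i := by gcongr; linarith
    _ ≤ (x + 1) ^ e := pow_le_pow_right₀ (by linarith) (by grind)

lemma exists_abs_eval_sub_leadingCoeff_mul_pow_le (f : ℝ[X]) :
    ∃ B, 0 ≤ B ∧ ∀ x, 0 ≤ x →
      |f.eval x - f.leadingCoeff * x ^ f.natDegree| ≤ B * (x + 1) ^ (f.natDegree - 1) := by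
  refine ⟨∑ i ∈ range (f.eraseLead.natDegree + 1), |f.eraseLead.coeff i|,
    sum_nonneg fun i _ => abs_nonneg _, fun x hx => ?_⟩
  have hsplit : f.eval x - f.leadingCoeff * x ^ f.natDegree = f.eraseLead.eval x := by
    have h := congrArg (eval x) f.eraseLead_add_C_mul_X_pow
    rw [eval_add, eval_mul, eval_C, eval_pow, eval_X] at h
    linarith
  rw [hsplit]
  exact abs_eval_le_of_natDegree_le (by have := f.eraseLead_natDegree_le; omega) hx

lemma exists_leadingCoeff_mul_shift_pow_bounds (f : ℝ[X]) (hd : 1 ≤ f.natDegree)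
    (hc : 0 < f.leadingCoeff) :
    ∃ C, 1 ≤ C ∧ (∀ x, C ≤ x → f.leadingCoeff * (x - C) ^ f.natDegree ≤ f.eval x) ∧
      ∀ x, 0 ≤ x → f.eval x < f.leadingCoeff * (x + C) ^ f.natDegree := by
  obtain ⟨B, hB, hbound⟩ := f.exists_abs_eval_sub_leadingCoeff_mul_pow_le
  generalize f.leadingCoeff = c, f.natDegree = d at *
  obtain ⟨C, hC1, hBC⟩ : ∃ C : ℝ, 1 ≤ C ∧ B * 2 ^ (d - 1) < c * C :=
    ⟨max 1 ((B * 2 ^ (d - 1) + 1) / c), le_max_left _ _, by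
      calc B * 2 ^ (d - 1) < c * ((B * 2 ^ (d - 1) + 1) / c) := by
            rw [mul_div_cancel₀ _ hc.ne']; exact lt_add_one _
        _ ≤ c * max 1 ((B * 2 ^ (d - 1) + 1) / c) := by gcongr; exact le_max_right _ _⟩
  refine ⟨C, hC1, fun x hx => ?_, fun x hx => ?_⟩
  · have hx0 : 0 ≤ x := by linarith
    have hgap := sub_mul_pow_pred_le_pow_sub_pow hd (by linarith) (by linarith : x - C ≤ x)
    calc c * (x - C) ^ d ≤ c * x ^ d - c * C * x ^ (d - 1) := by
          rw [sub_sub_cancel] at hgap; nlinarith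
      _ ≤ c * x ^ d - B * 2 ^ (d - 1) * x ^ (d - 1) := by gcongr
      _ ≤ c * x ^ d - B * (x + 1) ^ (d - 1) := by
          rw [mul_assoc, ← mul_pow]; gcongr; linarith
      _ ≤ f.eval x := by linarith [(abs_le.mp (hbound x hx0)).1]
  · have hgap := sub_mul_pow_pred_le_pow_sub_pow hd hx (by linarith : x ≤ x + C)
    have hB2 : B ≤ B * 2 ^ (d - 1) := le_mul_of_one_le_right hB (one_le_pow₀ (by norm_num))
    calc f.eval x ≤ c * x ^ d + B * (x + 1) ^ (d - 1) := by
          linarith [(abs_le.mp (hbound x hx)).2]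
      _ < c * x ^ d + c * C * (x + 1) ^ (d - 1) := by gcongr; linarith
      _ ≤ c * x ^ d + c * C * (x + C) ^ (d - 1) := by gcongr
      _ ≤ c * (x + C) ^ d := by rw [add_sub_cancel_left] at hgap; nlinarith

end Polynomial

section Counting

variable {F : ℕ → ℕ} {M m : ℕ} {s : ℝ}

lemma card_filter_lt_le (hs : 0 ≤ s) (h : ∀ n : ℕ, s ≤ n → m ≤ F n) :
    (#{n ∈ range M | F n < m} : ℝ) ≤ s + 1 := by
  have hsub : {n ∈ range M | F n < m} ⊆ range ⌈s⌉₊ := by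
    intro n hn
    rw [mem_range, Nat.lt_ceil]
    by_contra! hsn
    exact (h n hsn).not_gt (mem_filter.mp hn).2
  calc (#{n ∈ range M | F n < m} : ℝ) ≤ ⌈s⌉₊ := by
        exact_mod_cast (card_le_card hsub).trans_eq (card_range _)
    _ ≤ s + 1 := (Nat.ceil_lt_add_one hs).le

lemma le_card_filter_lt (hF : StrictMono F) (hmM : m ≤ M) (h : ∀ n : ℕ, (n : ℝ) ≤ s → F n < m) :
    s ≤ #{n ∈ range M | F n < m} := by
  rcases lt_or_ge s 0 with hs | hs
  · exact hs.le.trans (Nat.cast_nonneg _)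
  have hsub : range (⌊s⌋₊ + 1) ⊆ {n ∈ range M | F n < m} := by
    intro n hn
    have hFn := h n ((Nat.le_floor_iff hs).mp (Nat.lt_succ_iff.mp (mem_range.mp hn)))
    exact mem_filter.mpr ⟨mem_range.mpr (hF.le_apply.trans_lt (hFn.trans_le hmM)), hFn⟩
  calc s ≤ ⌊s⌋₊ + 1 := (Nat.lt_floor_add_one s).le
    _ ≤ #{n ∈ range M | F n < m} := by
        exact_mod_cast (card_range _).symm.trans_le (card_le_card hsub)

end Counting

lemma card_filter_le_and_lt_add_card_filter_lt {α β : Type*} [LinearOrder β] (s : Finset α)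
    (g : α → β) {a b : β} (hab : a ≤ b) :
    #{x ∈ s | a ≤ g x ∧ g x < b} + #{x ∈ s | g x < a} = #{x ∈ s | g x < b} := by
  rw [← card_union_of_disjoint (disjoint_filter.mpr fun x _ h h' => h.1.not_gt h'),
    filter_union_right]
  congr 1
  refine filter_congr fun x _ => ?_
  constructor
  · rintro (h | h)
    exacts [h.2, h.trans_le hab]
  · intro h
    exact (le_or_gt a (g x)).imp (⟨·, h⟩) id

lemma Nat.log_eq_of_pow_le_of_lt_two_mul_pow {b j k : ℕ} (hb : 2 ≤ b) (h₁ : b ^ j ≤ k)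
    (h₂ : k < 2 * b ^ j) : Nat.log b k = j :=
  Nat.log_eq_of_pow_le_of_lt_pow h₁ (h₂.trans_le (by rw [pow_succ']; gcongr))

/-- `3 ≤ b` gives `2 * b ^ J < b ^ (J + 1)`; in base `2` the block `j = J + 1` would meet the
left-hand side as well. -/
lemma card_filter_leading_digit_one (F : ℕ → ℕ) (s : Finset ℕ) {b : ℕ} (hb : 3 ≤ b) (J : ℕ) :
    #{n ∈ s | F n ≤ 2 * b ^ J ∧ ∃ j : ℕ, b ^ j ≤ F n ∧ F n < 2 * b ^ j} =
      ∑ j ∈ range (J + 1), #{n ∈ s | b ^ j ≤ F n ∧ F n < 2 * b ^ j} := by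
  have hb2 : 2 ≤ b := by omega
  rw [← card_biUnion fun i _ j _ hij => disjoint_filter.mpr fun n _ hi hj =>
    hij ((Nat.log_eq_of_pow_le_of_lt_two_mul_pow hb2 hi.1 hi.2).symm.trans
      (Nat.log_eq_of_pow_le_of_lt_two_mul_pow hb2 hj.1 hj.2))]
  congr 1
  ext n
  simp only [mem_filter, mem_biUnion, mem_range]
  constructor
  · rintro ⟨hn, hJ, j, hj⟩
    have : b ^ j < b ^ (J + 1) :=
      hj.1.trans_lt (hJ.trans_lt (by rw [pow_succ']; gcongr; omega))
    exact ⟨j, (Nat.pow_lt_pow_iff_right (by omega)).mp this, hn, hj⟩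
  · rintro ⟨j, hjJ, hn, hj⟩
    have : b ^ j ≤ b ^ J := pow_le_pow_right₀ (by omega) (by omega)
    exact ⟨hn, by omega, j, hj⟩

lemma Real.rpow_div_natCast_pow {x : ℝ} (hx : 0 ≤ x) {d : ℕ} (hd : d ≠ 0) (r : ℝ) :
    (x ^ (r / d)) ^ d = x ^ r := by
  rw [← Real.rpow_natCast, ← Real.rpow_mul hx, div_mul_cancel₀ _ (Nat.cast_ne_zero.mpr hd)]

namespace Polynomial

variable (f : ℝ[X]) (hd : 1 ≤ f.natDegree) (hc : 0 < f.leadingCoeff) {F : ℕ → ℕ}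
  (hF : ∀ n : ℕ, (F n : ℝ) = f.eval (n : ℝ)) (hmono : StrictMono F)
include hd hc hF hmono

lemma exists_abs_card_filter_lt_sub_le :
    ∃ A, ∀ M m : ℕ, m ≤ M → ∀ t : ℝ, 0 ≤ t → f.leadingCoeff * t ^ f.natDegree = m →
      |(#{n ∈ range M | F n < m} : ℝ) - t| ≤ A := by
  obtain ⟨C, hC1, hlow, hup⟩ := f.exists_leadingCoeff_mul_shift_pow_bounds hd hc
  refine ⟨C + 1, fun M m hmM t ht htm => abs_sub_le_iff.mpr ⟨?_, ?_⟩⟩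
  · have := card_filter_lt_le (M := M) (s := t + C) (add_nonneg ht (by linarith)) fun n hn => by
      have : f.leadingCoeff * t ^ f.natDegree ≤ f.leadingCoeff * ((n : ℝ) - C) ^ f.natDegree := by
        gcongr; linarith
      exact_mod_cast (htm.symm.le.trans this).trans (hF n ▸ hlow n (by linarith))
    linarith
  · have := le_card_filter_lt hmono hmM (s := t - C) fun n hn => by
      have : f.leadingCoeff * ((n : ℝ) + C) ^ f.natDegree ≤ f.leadingCoeff * t ^ f.natDegree := by
        gcongr; linarith
      exact_mod_cast (hF n ▸ hup n n.cast_nonneg).trans_le (this.trans htm.le)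
    linarith

lemma exists_abs_card_filter_le_and_lt_sub_le :
    ∃ A, ∀ M a b : ℕ, a ≤ b → b ≤ M → ∀ s t : ℝ, 0 ≤ s → 0 ≤ t →
      f.leadingCoeff * s ^ f.natDegree = a → f.leadingCoeff * t ^ f.natDegree = b →
      |(#{n ∈ range M | a ≤ F n ∧ F n < b} : ℝ) - (t - s)| ≤ A := by
  obtain ⟨A, hA⟩ := f.exists_abs_card_filter_lt_sub_le hd hc hF hmono
  refine ⟨2 * A, fun M a b hab hbM s t hs ht hsa htb => ?_⟩
  have hsplit : (#{n ∈ range M | a ≤ F n ∧ F n < b} : ℝ) =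
      #{n ∈ range M | F n < b} - #{n ∈ range M | F n < a} := by
    rw [eq_sub_iff_add_eq]
    exact_mod_cast card_filter_le_and_lt_add_card_filter_lt _ F hab
  have hb := abs_le.mp (hA M b hbM t ht htb)
  have ha := abs_le.mp (hA M a (hab.trans hbM) s hs hsa)
  rw [hsplit, abs_le]
  constructor <;> linarith [hb.1, hb.2, ha.1, ha.2]

end Polynomial

lemma isBigO_sum_range_sub_mul_sum_Icc {X : ℕ → ℕ → ℝ} {y : ℕ → ℝ} {K A : ℝ}
    (h : ∀ J j, j ≤ J → |X J j - K * y j| ≤ A) :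
    (fun J => ∑ j ∈ range (J + 1), X J j - K * ∑ j ∈ Icc 1 J, y j) =O[atTop]
      (fun J : ℕ => (J : ℝ)) := by
  have hA : 0 ≤ A := (abs_nonneg _).trans (h 0 0 le_rfl)
  refine Asymptotics.IsBigO.of_bound (2 * A + |K * y 0|) ?_
  filter_upwards [eventually_ge_atTop 1] with J hJ
  have hJ1 : (1 : ℝ) ≤ J := by exact_mod_cast hJ
  have hsum : ∑ j ∈ range (J + 1), X J j - K * ∑ j ∈ Icc 1 J, y j =
      ∑ j ∈ range (J + 1), (X J j - K * y j) + K * y 0 := by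
    have h0 : 0 ∉ Icc 1 J := by simp
    rw [Nat.range_succ_eq_Icc_zero, ← insert_Icc_add_one_left_eq_Icc (Nat.zero_le J),
      zero_add, sum_sub_distrib, sum_insert h0, sum_insert h0, mul_sum]
    ring
  have hbound : |∑ j ∈ range (J + 1), (X J j - K * y j)| ≤ (J + 1) * A := by
    refine (abs_sum_le_sum_abs _ _).trans ?_
    simpa using sum_le_sum fun j hj => h J j (Nat.lt_succ_iff.mp (mem_range.mp hj))
  rw [Real.norm_eq_abs, Real.norm_eq_abs, Nat.abs_cast, hsum]
  calc _ ≤ |∑ j ∈ range (J + 1), (X J j - K * y j)| + |K * y 0| := abs_add_le _ _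
    _ ≤ (J + 1) * A + |K * y 0| := by linarith
    _ ≤ (2 * A + |K * y 0|) * J := by nlinarith [abs_nonneg (K * y 0)]

/-- Let `F : ℕ → ℕ` be a strictly increasing polynomial of degree `d ≥ 1` with
positive leading coefficient `c_d`. Then the number of `n` with
`F n ≤ 2·10^J` and `F n` having leading decimal digit `1` equals
`((2^(1/d) - 1)/c_d^(1/d)) · ∑_{i=1}^{J} 10^(i/d) + O(J)`. -/
theorem stmt8 (f : Polynomial ℝ) (d : ℕ) (hd : 1 ≤ d) (hdeg : f.natDegree = d)
    (hc : 0 < f.leadingCoeff)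
    (F : ℕ → ℕ) (hF : ∀ n : ℕ, (F n : ℝ) = f.eval (n : ℝ)) (hmono : StrictMono F) :
    (fun J : ℕ =>
        (((Finset.range (2 * 10 ^ J + 1)).filter
            (fun n => F n ≤ 2 * 10 ^ J ∧
              ∃ j : ℕ, 10 ^ j ≤ F n ∧ F n < 2 * 10 ^ j)).card : ℝ)
        - ((2 : ℝ) ^ ((1 : ℝ) / d) - 1) / f.leadingCoeff ^ ((1 : ℝ) / d)
            * ∑ i ∈ Finset.Icc 1 J, (10 : ℝ) ^ ((i : ℝ) / d))
      =O[atTop] (fun J : ℕ => (J : ℝ)) := by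
  subst hdeg
  obtain ⟨A, hA⟩ := f.exists_abs_card_filter_le_and_lt_sub_le hd hc hF hmono
  have hd0 : f.natDegree ≠ 0 := by omega
  set c := f.leadingCoeff
  set u : ℕ → ℝ := fun j => (10 : ℝ) ^ ((j : ℝ) / f.natDegree) / c ^ ((1 : ℝ) / f.natDegree)
  have hu : ∀ j : ℕ, c * u j ^ f.natDegree = (10 ^ j : ℕ) := fun j => by
    simp only [u, div_pow, Real.rpow_div_natCast_pow (by norm_num : (0 : ℝ) ≤ 10) hd0,
      Real.rpow_div_natCast_pow hc.le hd0, Real.rpow_natCast, Real.rpow_one]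
    push_cast
    field_simp
  have h2u : ∀ j : ℕ, c * (2 ^ ((1 : ℝ) / f.natDegree) * u j) ^ f.natDegree = (2 * 10 ^ j : ℕ) :=
    fun j => by
      rw [mul_pow, Real.rpow_div_natCast_pow (by norm_num) hd0, Real.rpow_one, mul_left_comm, hu]
      push_cast; rfl
  refine (isBigO_sum_range_sub_mul_sum_Icc (A := A)
    (X := fun J j => #{n ∈ range (2 * 10 ^ J + 1) | 10 ^ j ≤ F n ∧ F n < 2 * 10 ^ j})
    (y := fun j => (10 : ℝ) ^ ((j : ℝ) / f.natDegree))
    (K := (2 ^ ((1 : ℝ) / f.natDegree) - 1) / c ^ ((1 : ℝ) / f.natDegree))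
    fun J j hj => ?_).congr_left fun J => ?_
  · have : 10 ^ j ≤ 10 ^ J := pow_le_pow_right₀ (by norm_num) hj
    convert hA (2 * 10 ^ J + 1) (10 ^ j) (2 * 10 ^ j) (by omega) (by omega) _ _ (by positivity)
      (by positivity) (hu j) (h2u j) using 2
    simp only [u]
    ring
  · rw [card_filter_leading_digit_one F _ (by norm_num) J, Nat.cast_sum]
end

section
/- Let f: ℕ → ℕ be a non-constant polynomial with positive leading coefficient c_d and degree d ≥ 1. Then limsup_{J→∞} #{n ≤ N_J : f(n) has leading decimal digit 1} / N_J ≥ 5^{1/d}(2^{1/d} − 1) / (2(10^{1/d} − 1)), where N_J = max{n : f(n) ≤ 2·10^J}. -/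
/-!
Let `N(x)` be the largest `n` with `F n ≤ x`. Since `F n ~ c nᵈ`, the sandwich
`F (N x) ≤ x < F (N x + 1)` gives `c N(x)ᵈ ~ x`, so `N(y) / N(x) → ρ^(1/d)` whenever `y / x → ρ`.
The `n` with `10ʲ ≤ F n < 2·10ʲ` form the block `(N(10ʲ - 1), N(2·10ʲ - 1)]`, and these blocks
are disjoint for distinct `j`. Relative to `N_J = N(2·10ᴶ)`, the block with `j = J - i` has
density tending to `10^(-i/d) (1 - 2^(-1/d))`, so the limsup is at least the full geometric sum
`5^(1/d)(2^(1/d) - 1)/(10^(1/d) - 1)`, which is twice the claimed bound.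
-/

open scoped Classical
open Filter Finset Topology

-- As `n ≤ F n` for strictly monotone `F`, searching `n ≤ x` finds the largest `n` with `F n ≤ x`.
noncomputable def greatestLe (F : ℕ → ℕ) (x : ℕ) : ℕ := Nat.findGreatest (fun n => F n ≤ x) x

section greatestLe

variable {F : ℕ → ℕ}

theorem le_greatestLe_iff (hF : StrictMono F) {x n : ℕ} (hn : 1 ≤ n) :
    n ≤ greatestLe F x ↔ F n ≤ x := by
  refine ⟨fun h => ?_, fun h => Nat.le_findGreatest (hF.le_apply.trans h) h⟩
  exact (hF.monotone h).trans
    (Nat.findGreatest_of_ne_zero (P := fun n => F n ≤ x) rfl (by omega))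

theorem apply_greatestLe_le (hF : StrictMono F) {x : ℕ} (h : 1 ≤ greatestLe F x) :
    F (greatestLe F x) ≤ x :=
  (le_greatestLe_iff hF h).1 le_rfl

theorem lt_apply_greatestLe_add_one (hF : StrictMono F) (x : ℕ) :
    x < F (greatestLe F x + 1) := by
  by_contra! h
  have := (le_greatestLe_iff hF (Nat.le_add_left 1 _)).2 h
  omega

theorem greatestLe_mono : Monotone (greatestLe F) := fun _ _ hxy =>
  Nat.findGreatest_mono (fun _ h => h.trans hxy) hxy

theorem tendsto_greatestLe_atTop (hF : StrictMono F) : Tendsto (greatestLe F) atTop atTop := by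
  refine tendsto_atTop.2 fun b => ?_
  filter_upwards [eventually_ge_atTop (F (max b 1))] with x hx
  exact (le_max_left b 1).trans ((le_greatestLe_iff hF (le_max_right b 1)).2 hx)

variable {c : ℝ} {d : ℕ}

theorem tendsto_mul_greatestLe_pow_div (hF : StrictMono F) (hc : 0 < c)
    (hFc : Tendsto (fun n : ℕ => (F n : ℝ) / (c * n ^ d)) atTop (𝓝 1)) :
    Tendsto (fun x : ℕ => c * (greatestLe F x : ℝ) ^ d / x) atTop (𝓝 1) := by
  set N := greatestLe F
  have hN := tendsto_greatestLe_atTop hF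
  have hup : Tendsto (fun x => ((F (N x) : ℝ) / (c * N x ^ d))⁻¹) atTop (𝓝 1) := by
    simpa using (hFc.comp hN).inv₀ one_ne_zero
  have hlo : Tendsto (fun x => ((N x : ℝ) / (N x + 1)) ^ d
      / ((F (N x + 1) : ℝ) / (c * ((N x + 1 : ℕ) : ℝ) ^ d))) atTop (𝓝 1) := by
    have := (((tendsto_natCast_div_add_atTop (1 : ℝ)).comp hN).pow d).div
      (hFc.comp ((tendsto_add_atTop_nat 1).comp hN)) one_ne_zero
    rwa [one_pow, div_one] at this
  refine tendsto_of_tendsto_of_tendsto_of_le_of_le' hlo hup ?_ ?_ <;>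
    filter_upwards [hN.eventually_ge_atTop 1] with x hx
  · have hxF := lt_apply_greatestLe_add_one hF x
    have hx0 : 0 < x := (hx.trans hF.le_apply).trans (apply_greatestLe_le hF hx)
    have hNx : (0 : ℝ) < N x := by exact_mod_cast hx
    rw [show ((N x : ℝ) / (N x + 1)) ^ d / ((F (N x + 1) : ℝ) / (c * ((N x + 1 : ℕ) : ℝ) ^ d))
        = c * (N x : ℝ) ^ d / F (N x + 1) by push_cast; rw [div_pow]; field_simp]
    gcongr
  · have hFx := apply_greatestLe_le hF hx
    have hF0 : (0 : ℝ) < F (N x) := by exact_mod_cast hx.trans hF.le_apply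
    rw [inv_div]
    gcongr

theorem tendsto_greatestLe_div_greatestLe (hF : StrictMono F) (hc : 0 < c) (hd : d ≠ 0)
    (hFc : Tendsto (fun n : ℕ => (F n : ℝ) / (c * n ^ d)) atTop (𝓝 1))
    {x y : ℕ → ℕ} (hx : Tendsto x atTop atTop) {ρ : ℝ} (hρ : 0 < ρ)
    (hyx : Tendsto (fun J => (y J : ℝ) / x J) atTop (𝓝 ρ)) :
    Tendsto (fun J => (greatestLe F (y J) : ℝ) / greatestLe F (x J)) atTop
      (𝓝 (ρ ^ (1 / d : ℝ))) := by
  have hxR : Tendsto (fun J => (x J : ℝ)) atTop atTop := tendsto_natCast_atTop_iff.2 hx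
  have hy : Tendsto y atTop atTop :=
    tendsto_natCast_atTop_iff.1 <| (hyx.pos_mul_atTop hρ hxR).congr' <| by
      filter_upwards [hxR.eventually_gt_atTop 0] with J hJ
      field_simp
  have hA := tendsto_mul_greatestLe_pow_div hF hc hFc
  have hpow : Tendsto (fun J => ((greatestLe F (y J) : ℝ) / greatestLe F (x J)) ^ d)
      atTop (𝓝 ρ) := by
    have := ((hA.comp hy).mul hyx).mul ((hA.comp hx).inv₀ one_ne_zero)
    rw [one_mul, inv_one, mul_one] at this
    refine this.congr' ?_
    filter_upwards [hx.eventually_ge_atTop 1, hy.eventually_ge_atTop 1,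
      ((tendsto_greatestLe_atTop hF).comp hx).eventually_ge_atTop 1] with J hxJ hyJ hNJ
    have : (0 : ℝ) < x J := by exact_mod_cast hxJ
    have : (0 : ℝ) < y J := by exact_mod_cast hyJ
    have : (0 : ℝ) < greatestLe F (x J) := by exact_mod_cast hNJ
    simp only [Function.comp_apply]
    rw [div_pow]
    field_simp
  refine (hpow.rpow_const (Or.inr (by positivity))).congr fun J => ?_
  rw [one_div, Real.pow_rpow_inv_natCast (by positivity) hd]

end greatestLe

section leadingOne

variable {F : ℕ → ℕ}

noncomputable def leadingOneBlock (F : ℕ → ℕ) (j : ℕ) : Finset ℕ :=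
  Ioc (greatestLe F (10 ^ j - 1)) (greatestLe F (2 * 10 ^ j - 1))

theorem mem_leadingOneBlock (hF : StrictMono F) {j n : ℕ} (h : n ∈ leadingOneBlock F j) :
    1 ≤ n ∧ 10 ^ j ≤ F n ∧ F n < 2 * 10 ^ j := by
  rw [leadingOneBlock, mem_Ioc] at h
  have hn : 1 ≤ n := by omega
  have hlo := (le_greatestLe_iff hF (x := 10 ^ j - 1) hn).not.1 (by omega)
  have hhi := (le_greatestLe_iff hF hn).1 h.2
  have : 0 < 10 ^ j := by positivity
  omega

theorem log_apply_of_mem_leadingOneBlock (hF : StrictMono F) {j n : ℕ}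
    (h : n ∈ leadingOneBlock F j) : Nat.log 10 (F n) = j := by
  obtain ⟨-, hlo, hhi⟩ := mem_leadingOneBlock hF h
  exact Nat.log_eq_of_pow_le_of_lt_pow hlo (by rw [pow_succ]; omega)

theorem sum_card_leadingOneBlock_le (hF : StrictMono F) {k J : ℕ} (hk : k ≤ J + 1) :
    ∑ i ∈ range k, #(leadingOneBlock F (J - i))
      ≤ #{n ∈ Icc 1 (greatestLe F (2 * 10 ^ J)) | ∃ j : ℕ, 10 ^ j ≤ F n ∧ F n < 2 * 10 ^ j} := by
  rw [← card_biUnion]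
  · refine card_le_card (biUnion_subset.2 fun i hi n hn => ?_)
    obtain ⟨hn1, hlo, hhi⟩ := mem_leadingOneBlock hF hn
    have : 10 ^ (J - i) ≤ 10 ^ J := Nat.pow_le_pow_right (by norm_num) (Nat.sub_le J i)
    rw [mem_filter, mem_Icc, le_greatestLe_iff hF hn1]
    exact ⟨⟨hn1, by omega⟩, J - i, hlo, hhi⟩
  · intro i hi i' hi' hii'
    refine disjoint_left.2 fun n hn hn' => hii' ?_
    have := (log_apply_of_mem_leadingOneBlock hF hn).symm.trans
      (log_apply_of_mem_leadingOneBlock hF hn')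
    simp only [coe_range, Set.mem_Iio] at hi hi'
    omega

theorem tendsto_mul_pow_ten_sub_one_div {a : ℕ} (ha : 1 ≤ a) (i : ℕ) :
    Tendsto (fun J => ((a * 10 ^ (J - i) - 1 : ℕ) : ℝ) / (2 * 10 ^ J : ℕ)) atTop
      (𝓝 (a / (2 * 10 ^ i))) := by
  have h := (tendsto_const_nhds (x := (a / (2 * 10 ^ i) : ℝ))).sub <|
    (tendsto_const_nhds (x := (1 : ℝ))).div_atTop <|
      (tendsto_pow_atTop_atTop_of_one_lt (by norm_num : (1 : ℝ) < 10)).const_mul_atTop two_pos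
  rw [sub_zero] at h
  refine h.congr' ?_
  filter_upwards [eventually_ge_atTop i] with J hJ
  obtain ⟨m, rfl⟩ := Nat.exists_eq_add_of_le' hJ
  have : 1 ≤ a * 10 ^ m := Nat.one_le_iff_ne_zero.2 (by positivity)
  rw [Nat.add_sub_cancel, Nat.cast_sub this]
  push_cast
  field_simp
  ring

theorem tendsto_card_leadingOneBlock_div {c : ℝ} {d : ℕ} (hF : StrictMono F) (hc : 0 < c)
    (hd : d ≠ 0) (hFc : Tendsto (fun n : ℕ => (F n : ℝ) / (c * n ^ d)) atTop (𝓝 1)) (i : ℕ) :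
    Tendsto (fun J => (#(leadingOneBlock F (J - i)) : ℝ) / greatestLe F (2 * 10 ^ J)) atTop
      (𝓝 ((1 / 10 ^ i : ℝ) ^ (1 / d : ℝ) - (1 / (2 * 10 ^ i) : ℝ) ^ (1 / d : ℝ))) := by
  have hx : Tendsto (fun J => 2 * 10 ^ J) atTop atTop :=
    (tendsto_pow_atTop_atTop_of_one_lt (by norm_num : 1 < 10)).const_mul_atTop' two_pos
  have h2 := tendsto_greatestLe_div_greatestLe hF hc hd hFc hx (by positivity)
    (tendsto_mul_pow_ten_sub_one_div one_le_two i)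
  have h1 := tendsto_greatestLe_div_greatestLe hF hc hd hFc hx (by positivity)
    (tendsto_mul_pow_ten_sub_one_div le_rfl i)
  simp only [one_mul, Nat.cast_one, Nat.cast_ofNat] at h1 h2
  convert h2.sub h1 using 3 with J
  · rw [leadingOneBlock, Nat.card_Ioc, Nat.cast_sub (greatestLe_mono (by omega)), sub_div]
  · field_simp

end leadingOne

theorem hasSum_one_div_rpow_sub {p : ℝ} (hp : 0 < p) :
    HasSum (fun i : ℕ => (1 / 10 ^ i : ℝ) ^ p - (1 / (2 * 10 ^ i) : ℝ) ^ p)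
      (5 ^ p * (2 ^ p - 1) / (10 ^ p - 1)) := by
  have h10 : (1 / 10 : ℝ) ^ p < 1 := Real.rpow_lt_one (by norm_num) (by norm_num) hp
  have h2 : (1 : ℝ) < 2 ^ p := Real.one_lt_rpow (by norm_num) hp
  have hgeom := (hasSum_geometric_of_lt_one (by positivity) h10).mul_left (1 - (1 / 2 : ℝ) ^ p)
  have hterm : (fun i : ℕ => (1 / 10 ^ i : ℝ) ^ p - (1 / (2 * 10 ^ i) : ℝ) ^ p)
      = fun i => (1 - (1 / 2 : ℝ) ^ p) * ((1 / 10 : ℝ) ^ p) ^ i := by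
    ext i
    rw [← one_div_mul_one_div, Real.mul_rpow (by norm_num) (by positivity), ← one_div_pow,
      Real.rpow_pow_comm (by norm_num)]
    ring
  have hval : (5 : ℝ) ^ p * (2 ^ p - 1) / (10 ^ p - 1)
      = (1 - (1 / 2 : ℝ) ^ p) * (1 - (1 / 10 : ℝ) ^ p)⁻¹ := by
    have : (1 : ℝ) < 5 ^ p * 2 ^ p :=
      one_lt_mul_of_le_of_lt (Real.one_le_rpow (by norm_num) hp.le) h2
    rw [Real.div_rpow zero_le_one (by norm_num), Real.div_rpow zero_le_one (by norm_num),
      Real.one_rpow, show (10 : ℝ) = 5 * 2 by norm_num, Real.mul_rpow (by norm_num) (by norm_num)]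
    field_simp
  rw [hterm, hval]
  exact hgeom

theorem tendsto_apply_div_leadingCoeff_mul_pow (f : Polynomial ℝ) (hf : 0 < f.leadingCoeff)
    {F : ℕ → ℕ} (hF : ∀ n : ℕ, (F n : ℝ) = f.eval (n : ℝ)) :
    Tendsto (fun n : ℕ => (F n : ℝ) / (f.leadingCoeff * n ^ f.natDegree)) atTop (𝓝 1) := by
  refine ((Asymptotics.isEquivalent_iff_tendsto_one ?_).1 f.isEquivalent_atTop_lead).comp
    tendsto_natCast_atTop_atTop |>.congr fun n => by simp [hF]
  filter_upwards [eventually_gt_atTop 0] with x hx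
  positivity

theorem le_limsup_card_leadingOne_div {F : ℕ → ℕ} {c : ℝ} {d : ℕ} (hF : StrictMono F)
    (hc : 0 < c) (hd : d ≠ 0)
    (hFc : Tendsto (fun n : ℕ => (F n : ℝ) / (c * n ^ d)) atTop (𝓝 1)) :
    (5 : ℝ) ^ (1 / d : ℝ) * (2 ^ (1 / d : ℝ) - 1) / (10 ^ (1 / d : ℝ) - 1)
      ≤ limsup (fun J => (#{n ∈ Icc 1 (greatestLe F (2 * 10 ^ J)) |
          ∃ j : ℕ, 10 ^ j ≤ F n ∧ F n < 2 * 10 ^ j} : ℝ) / greatestLe F (2 * 10 ^ J)) atTop := by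
  have hbdd : IsBoundedUnder (· ≤ ·) atTop fun J =>
      (#{n ∈ Icc 1 (greatestLe F (2 * 10 ^ J)) | ∃ j : ℕ, 10 ^ j ≤ F n ∧ F n < 2 * 10 ^ j} : ℝ)
        / greatestLe F (2 * 10 ^ J) :=
    isBoundedUnder_of ⟨1, fun J => div_le_one_of_le₀
      (by simpa using card_filter_le (Icc 1 (greatestLe F (2 * 10 ^ J))) _) (by positivity)⟩
  refine le_of_tendsto' (hasSum_one_div_rpow_sub (by positivity)).tendsto_sum_nat fun k => ?_
  have hlim := tendsto_finsetSum (range k) fun i _ =>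
    tendsto_card_leadingOneBlock_div hF hc hd hFc i
  rw [← hlim.limsup_eq]
  refine limsup_le_limsup ?_ hlim.isCoboundedUnder_le hbdd
  filter_upwards [eventually_ge_atTop k] with J hJ
  rw [← sum_div, ← Nat.cast_sum]
  exact div_le_div_of_nonneg_right
    (mod_cast sum_card_leadingOneBlock_le hF (by omega)) (Nat.cast_nonneg _)

/-- Let `F : ℕ → ℕ` be a strictly increasing non-constant polynomial of degree
`d ≥ 1` with positive leading coefficient, and `N_J = max {n : F n ≤ 2·10^J}`.
Then the limsup over `J` of the proportion of `n ≤ N_J` whose image `F n` has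
leading decimal digit `1` is at least `5^(1/d)(2^(1/d)-1)/(2(10^(1/d)-1))`. -/
theorem stmt9 (f : Polynomial ℝ) (d : ℕ) (hd : 1 ≤ d) (hdeg : f.natDegree = d)
    (hc : 0 < f.leadingCoeff)
    (F : ℕ → ℕ) (hF : ∀ n : ℕ, (F n : ℝ) = f.eval (n : ℝ)) (hmono : StrictMono F) :
    (5 : ℝ) ^ ((1 : ℝ) / d) * ((2 : ℝ) ^ ((1 : ℝ) / d) - 1)
        / (2 * ((10 : ℝ) ^ ((1 : ℝ) / d) - 1))
      ≤ Filter.limsup (fun J : ℕ =>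
          (((Finset.Icc 1 (Nat.findGreatest (fun n => F n ≤ 2 * 10 ^ J) (2 * 10 ^ J))).filter
              (fun n => ∃ j : ℕ, 10 ^ j ≤ F n ∧ F n < 2 * 10 ^ j)).card : ℝ)
            / (Nat.findGreatest (fun n => F n ≤ 2 * 10 ^ J) (2 * 10 ^ J) : ℝ))
        Filter.atTop := by
  have hFc := tendsto_apply_div_leadingCoeff_mul_pow f hc hF
  rw [hdeg] at hFc
  have h2 : (1 : ℝ) ≤ 2 ^ (1 / d : ℝ) := Real.one_le_rpow (by norm_num) (by positivity)
  have h10 : (1 : ℝ) ≤ 10 ^ (1 / d : ℝ) := Real.one_le_rpow (by norm_num) (by positivity)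
  calc
    _ = (5 : ℝ) ^ (1 / d : ℝ) * (2 ^ (1 / d : ℝ) - 1) / (10 ^ (1 / d : ℝ) - 1) / 2 := by
      rw [div_div, mul_comm (10 ^ _ - 1)]
    _ ≤ (5 : ℝ) ^ (1 / d : ℝ) * (2 ^ (1 / d : ℝ) - 1) / (10 ^ (1 / d : ℝ) - 1) :=
      half_le_self (div_nonneg (mul_nonneg (by positivity) (by linarith)) (by linarith))
    _ ≤ _ := le_limsup_card_leadingOne_div hmono hc (by omega) hFc
end

section
/- For every natural number d ≥ 1, 5^{1/d}·(2^{1/d} − 1) / (2·(10^{1/d} − 1)) ≥ log 2 / (2 log 10). -/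
/-!
Put `t = 1/d`, `x = 2^t`, `y = 5^t`, so that `10^t = x y`. Clearing denominators, the inequality
becomes `log 10 · y ≤ log 2 + log 5 · x y`, i.e. `log 10 · 5^t ≤ log 2 + log 5 · 10^t`. This is
convexity of `exp`: `t log 5` is the convex combination of `0` and `t log 10` with weights
`log 2 / log 10` and `log 5 / log 10`.
-/

open Real

theorem add_mul_exp_mul_le (u v t : ℝ) (hu : 0 ≤ u) (hv : 0 ≤ v) :
    (u + v) * exp (t * v) ≤ u + v * exp (t * (u + v)) := by
  rcases (add_nonneg hu hv).eq_or_lt with huv | huv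
  · obtain rfl : u = 0 := by linarith
    obtain rfl : v = 0 := by linarith
    simp
  have hconv := convexOn_exp.2 (Set.mem_univ 0) (Set.mem_univ (t * (u + v)))
    (div_nonneg hu huv.le) (div_nonneg hv huv.le) (by field_simp)
  have hcomb : u / (u + v) * 0 + v / (u + v) * (t * (u + v)) = t * v := by field_simp; ring
  simp only [smul_eq_mul, hcomb, exp_zero, mul_one] at hconv
  calc (u + v) * exp (t * v)
      ≤ (u + v) * (u / (u + v) + v / (u + v) * exp (t * (u + v))) := by gcongr
    _ = u + v * exp (t * (u + v)) := by field_simp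

theorem log_div_log_mul_le_rpow_mul_rpow_sub_one_div {a b t : ℝ} (ha : 1 < a) (hb : 1 ≤ b)
    (ht : 0 < t) :
    log a / log (a * b) ≤ b ^ t * (a ^ t - 1) / ((a * b) ^ t - 1) := by
  have ha0 : 0 < a := by linarith
  have hb0 : 0 < b := by linarith
  have hlog : log (a * b) = log a + log b := log_mul ha0.ne' hb0.ne'
  have hkey := add_mul_exp_mul_le (log a) (log b) t (log_nonneg ha.le) (log_nonneg hb)
  rw [← hlog, mul_comm t, mul_comm t, ← rpow_def_of_pos hb0,
    ← rpow_def_of_pos (mul_pos ha0 hb0), hlog] at hkey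
  have hsplit : (a * b) ^ t = a ^ t * b ^ t := mul_rpow ha0.le hb0.le
  have hden : 1 < (a * b) ^ t := one_lt_rpow (by nlinarith) ht
  rw [div_le_div_iff₀ (by rw [hlog]; linarith [log_pos ha, log_nonneg hb]) (by linarith), hlog]
  rw [hsplit] at hkey hden ⊢
  linear_combination hkey

/-- For every natural `d ≥ 1`,
`5^(1/d)·(2^(1/d) - 1)/(2·(10^(1/d) - 1)) ≥ log 2 / (2 log 10)`. -/
theorem stmt10 (d : ℕ) (hd : 1 ≤ d) :
    Real.log 2 / (2 * Real.log 10) ≤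
      (5 : ℝ) ^ ((1 : ℝ) / d) * ((2 : ℝ) ^ ((1 : ℝ) / d) - 1)
        / (2 * ((10 : ℝ) ^ ((1 : ℝ) / d) - 1)) := by
  have ht : (0 : ℝ) < 1 / d := by positivity
  have h := log_div_log_mul_le_rpow_mul_rpow_sub_one_div (a := 2) (b := 5) (by norm_num)
    (by norm_num) ht
  norm_num only at h
  rw [mul_comm (2 : ℝ), mul_comm (2 : ℝ), ← div_div, ← div_div]
  gcongr
end

section
/- The sequence y_n = 5^{1/n}(2^{1/n} − 1)/(2(10^{1/n} − 1)) for n ≥ 1 is monotonically decreasing in n. -/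
/-!
Since `5^t (2^t - 1) = 10^t - 5^t`, we have `2 y_n = 1 - r(1/n)` with
`r(t) = (5^t - 1)/(10^t - 1)`, so it suffices that `r(1/m) ≤ r(1/n)` for `m ≤ n`.
Writing `p = 5^(1/(mn))` and `q = 10^(1/(mn))`, this is
`(p^n - 1)/(q^n - 1) ≤ (p^m - 1)/(q^m - 1)`.
Dividing out `p - 1` and `q - 1` turns it into an inequality between geometric sums, which
follows by induction on `n` from the termwise bound `p^n q^i ≤ q^n p^i` for `i ≤ n`.
-/

open Finset

section GeomSum

variable {R : Type*} [CommSemiring R] [PartialOrder R] [IsOrderedRing R] {p q : R}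

theorem pow_mul_pow_le_pow_mul_pow (hp : 0 ≤ p) (hpq : p ≤ q) {i n : ℕ} (hin : i ≤ n) :
    p ^ n * q ^ i ≤ q ^ n * p ^ i := by
  obtain ⟨j, rfl⟩ := Nat.exists_eq_add_of_le hin
  calc p ^ (i + j) * q ^ i = p ^ i * q ^ i * p ^ j := by ring
    _ ≤ p ^ i * q ^ i * q ^ j := by
      gcongr
      exact mul_nonneg (pow_nonneg hp i) (pow_nonneg (hp.trans hpq) i)
    _ = q ^ (i + j) * p ^ i := by ring

theorem pow_mul_geom_sum_le (hp : 0 ≤ p) (hpq : p ≤ q) {m n : ℕ} (hmn : m ≤ n) :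
    p ^ n * ∑ i ∈ range m, q ^ i ≤ q ^ n * ∑ i ∈ range m, p ^ i := by
  simp only [mul_sum]
  exact sum_le_sum fun _ _ => pow_mul_pow_le_pow_mul_pow hp hpq (by grind)

theorem geom_sum_mul_geom_sum_le (hp : 0 ≤ p) (hpq : p ≤ q) {m n : ℕ} (hmn : m ≤ n) :
    (∑ i ∈ range n, p ^ i) * ∑ i ∈ range m, q ^ i
      ≤ (∑ i ∈ range m, p ^ i) * ∑ i ∈ range n, q ^ i := by
  induction n, hmn using Nat.le_induction with
  | base => rw [mul_comm]
  | succ n hmn ih =>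
    rw [sum_range_succ, sum_range_succ, add_mul, mul_add]
    gcongr ?_ + ?_
    rw [mul_comm _ (q ^ n)]
    exact pow_mul_geom_sum_le hp hpq hmn

end GeomSum

theorem pow_sub_one_mul_pow_sub_one_le {R : Type*} [CommRing R] [PartialOrder R]
    [IsOrderedRing R] {p q : R} (hp : 1 ≤ p) (hpq : p ≤ q) {m n : ℕ} (hmn : m ≤ n) :
    (p ^ n - 1) * (q ^ m - 1) ≤ (p ^ m - 1) * (q ^ n - 1) := by
  have hp1 : 0 ≤ p - 1 := sub_nonneg.2 hp
  have hq1 : 0 ≤ q - 1 := sub_nonneg.2 (hp.trans hpq)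
  simp only [← geom_sum_mul]
  calc _ = ((∑ i ∈ range n, p ^ i) * ∑ i ∈ range m, q ^ i) * ((p - 1) * (q - 1)) := by ring
    _ ≤ ((∑ i ∈ range m, p ^ i) * ∑ i ∈ range n, q ^ i) * ((p - 1) * (q - 1)) := by
      gcongr ?_ * _
      exact geom_sum_mul_geom_sum_le (zero_le_one.trans hp) hpq hmn
    _ = _ := by ring

theorem pow_sub_one_div_pow_sub_one_le_of_le {R : Type*} [Field R] [LinearOrder R]
    [IsStrictOrderedRing R] {p q : R} (hp : 1 ≤ p) (hpq : p ≤ q) (hq : 1 < q) {m n : ℕ}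
    (hm : m ≠ 0) (hmn : m ≤ n) :
    (p ^ n - 1) / (q ^ n - 1) ≤ (p ^ m - 1) / (q ^ m - 1) := by
  have hqm : 0 < q ^ m - 1 := sub_pos.2 (one_lt_pow₀ hq hm)
  have hqn : 0 < q ^ n - 1 := sub_pos.2 (one_lt_pow₀ hq (by omega))
  rw [div_le_div_iff₀ hqn hqm]
  exact pow_sub_one_mul_pow_sub_one_le hp hpq hmn

theorem rpow_one_div_sub_one_div_le_of_le {a b : ℝ} (ha : 1 ≤ a) (hab : a ≤ b) (hb : 1 < b)
    {m n : ℕ} (hm : m ≠ 0) (hmn : m ≤ n) :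
    (a ^ (1 / m : ℝ) - 1) / (b ^ (1 / m : ℝ) - 1)
      ≤ (a ^ (1 / n : ℝ) - 1) / (b ^ (1 / n : ℝ) - 1) := by
  have hn : n ≠ 0 := by omega
  -- both roots are powers of the `mn`-th root
  have hroot : ∀ x : ℝ, 0 ≤ x → x ^ (1 / n : ℝ) = (x ^ (1 / (m * n) : ℝ)) ^ m ∧
      x ^ (1 / m : ℝ) = (x ^ (1 / (m * n) : ℝ)) ^ n := by
    intro x hx
    simp only [← Real.rpow_natCast, ← Real.rpow_mul hx]
    constructor <;> congr 1 <;> field_simp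
  obtain ⟨han, ham⟩ := hroot a (by linarith)
  obtain ⟨hbn, hbm⟩ := hroot b (by linarith)
  rw [han, ham, hbn, hbm]
  have hc : 0 < (1 / (m * n) : ℝ) := by positivity
  exact pow_sub_one_div_pow_sub_one_le_of_le (Real.one_le_rpow ha hc.le)
    (Real.rpow_le_rpow (by linarith) hab hc.le) (Real.one_lt_rpow hb hc) hm hmn

theorem five_rpow_mul_two_rpow_sub_one_div_eq {t : ℝ} (ht : 0 < t) :
    (5 : ℝ) ^ t * ((2 : ℝ) ^ t - 1) / (2 * ((10 : ℝ) ^ t - 1))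
      = (1 - ((5 : ℝ) ^ t - 1) / ((10 : ℝ) ^ t - 1)) / 2 := by
  have h10 : (10 : ℝ) ^ t = 5 ^ t * 2 ^ t := by
    rw [← Real.mul_rpow (by norm_num) (by norm_num)]; norm_num
  have hpos : 0 < (10 : ℝ) ^ t - 1 := sub_pos.2 (Real.one_lt_rpow (by norm_num) ht)
  field_simp
  rw [h10]
  ring

/-- The sequence `y n = 5^(1/n)(2^(1/n) - 1)/(2(10^(1/n) - 1))`, `n ≥ 1`,
is monotonically decreasing. -/
theorem stmt12 (m n : ℕ) (hm : 1 ≤ m) (hmn : m ≤ n) :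
    (5 : ℝ) ^ ((1 : ℝ) / n) * ((2 : ℝ) ^ ((1 : ℝ) / n) - 1)
        / (2 * ((10 : ℝ) ^ ((1 : ℝ) / n) - 1))
      ≤ (5 : ℝ) ^ ((1 : ℝ) / m) * ((2 : ℝ) ^ ((1 : ℝ) / m) - 1)
        / (2 * ((10 : ℝ) ^ ((1 : ℝ) / m) - 1)) := by
  have hm0 : m ≠ 0 := by omega
  have hn0 : n ≠ 0 := by omega
  rw [five_rpow_mul_two_rpow_sub_one_div_eq (by positivity),
    five_rpow_mul_two_rpow_sub_one_div_eq (by positivity)]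
  have hratio := rpow_one_div_sub_one_div_le_of_le (a := 5) (b := 10) (by norm_num)
    (by norm_num) (by norm_num) hm0 hmn
  linarith
end

section
/- For any non-constant polynomial f: ℕ → ℕ, the sequence (f(n))_{n≥1} is not a strong Benford sequence; equivalently, (log_{10} f(n))_n is not uniformly distributed modulo 1. -/
/-!
Since `F n ~ A n^d`, also `F (n + 1) ~ F n`. Let `a_k` be the last index with `F a_k < 10^k`
and `b_k + 1` the first index with `F (b_k + 1) ≥ 10^(k+1/2)`; crossing these levels between
consecutive indices gives `A a_k^d ~ 10^k` and `A b_k^d ~ 10^(k+1/2)`, so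
`a_k / b_k → t = 10^(-1/(2d)) < 1`. Every `n ∈ (a_k, b_k]` has
`fract (log₁₀ F n) ∈ [0, 1/2)`, so the counting function `c` of such `n` satisfies
`c b_k = c a_k + (b_k - a_k)`. If `c n / n → α`, dividing by `b_k` gives
`α = α t + (1 - t)`, i.e. `α = 1` rather than `1/2`.
-/

open scoped Classical
open Filter Topology Asymptotics Finset

theorem Int.fract_logb_mem_Ico {b x θ : ℝ} (hb : 1 < b) {k : ℤ} (hθ : θ ≤ 1)
    (h₁ : b ^ (k : ℝ) ≤ x) (h₂ : x < b ^ ((k : ℝ) + θ)) :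
    Int.fract (Real.logb b x) ∈ Set.Ico 0 θ := by
  have hx : 0 < x := (Real.rpow_pos_of_pos (by linarith) _).trans_le h₁
  have hk₁ : (k : ℝ) ≤ Real.logb b x := (Real.le_logb_iff_rpow_le hb hx).2 h₁
  have hk₂ : Real.logb b x < k + θ := (Real.logb_lt_iff_lt_rpow hb hx).2 h₂
  have hfloor : ⌊Real.logb b x⌋ = k := Int.floor_eq_iff.2 ⟨hk₁, by linarith⟩
  rw [Int.fract, hfloor]
  exact ⟨by linarith, by linarith⟩

open Polynomial in
theorem Polynomial.isEquivalent_atTop_eval_add (P : ℝ[X]) (c : ℝ) :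
    (fun x => P.eval (x + c)) ~[atTop] fun x => P.eval x := by
  have hq : (X + C c).natDegree = 1 := natDegree_X_add_C c
  have hcomp := (P.comp (X + C c)).isEquivalent_atTop_lead
  rw [leadingCoeff_comp (by simp [hq]), natDegree_comp, hq, leadingCoeff_X_add_C, one_pow,
    mul_one, mul_one] at hcomp
  simpa using hcomp.trans P.isEquivalent_atTop_lead.symm

theorem Asymptotics.IsEquivalent.of_le_of_le {α : Type*} {l : Filter α} {v w T : α → ℝ}
    (hvw : v ~[l] w) (hv : ∀ᶠ x in l, 0 < v x) (h₁ : ∀ᶠ x in l, v x ≤ T x)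
    (h₂ : ∀ᶠ x in l, T x ≤ w x) : v ~[l] T := by
  have hw : Tendsto (w / v) l (𝓝 1) :=
    (isEquivalent_iff_tendsto_one (hv.mono fun _ h => h.ne')).1 hvw.symm
  refine (isEquivalent_of_tendsto_one ?_).symm
  refine tendsto_of_tendsto_of_tendsto_of_le_of_le' tendsto_const_nhds hw ?_ ?_
  · filter_upwards [hv, h₁] with x hvx hx
    exact (one_le_div hvx).2 hx
  · filter_upwards [hv, h₂] with x hvx hx
    exact div_le_div_of_nonneg_right hx hvx.le

theorem tendsto_atTop_of_tendsto_comp {α : Type*} {l : Filter α} {u : ℕ → ℝ}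
    {a : α → ℕ} (h : Tendsto (u ∘ a) l atTop) : Tendsto a l atTop :=
  h.of_tendsto_comp <| (comap_mono atTop_le_cocompact).trans <|
    (comap_cocompact_le continuous_of_discreteTopology).trans cocompact_eq_atTop.le

section Crossing

variable {u : ℕ → ℝ} {T : ℝ}

theorem exists_lt_forall_lt_le (h₀ : u 0 < T) (hT : ∀ᶠ n in atTop, T ≤ u n) :
    ∃ a, u a < T ∧ ∀ n, a < n → T ≤ u n := by
  have hex : ∃ N, ∀ n, N ≤ n → T ≤ u n := eventually_atTop.1 hT
  have hN : Nat.find hex ≠ 0 := fun h => h₀.not_ge (Nat.find_spec hex 0 (by omega))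
  refine ⟨Nat.find hex - 1, ?_, fun n hn => Nat.find_spec hex n (by omega)⟩
  have hmin := Nat.find_min hex (Nat.sub_one_lt hN)
  push Not at hmin
  obtain ⟨m, hm, hmT⟩ := hmin
  obtain rfl | hlt := hm.eq_or_lt
  · exact hmT
  · exact absurd (Nat.find_spec hex m (by omega)) hmT.not_ge

theorem exists_forall_le_lt_le_succ (h₀ : u 0 < T) (hT : ∃ n, T ≤ u n) :
    ∃ b, (∀ n ≤ b, u n < T) ∧ T ≤ u (b + 1) := by
  have hN : Nat.find hT ≠ 0 := fun h => h₀.not_ge (h ▸ Nat.find_spec hT)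
  refine ⟨Nat.find hT - 1, fun n hn => not_le.1 (Nat.find_min hT (by omega)), ?_⟩
  simpa [Nat.sub_add_cancel (Nat.one_le_iff_ne_zero.2 hN)] using Nat.find_spec hT

end Crossing

theorem exists_blocks {u : ℕ → ℝ} (hu : Tendsto u atTop atTop)
    (hsucc : (fun n => u (n + 1)) ~[atTop] u) {T S : ℕ → ℝ} (hT : Tendsto T atTop atTop)
    (hTS : T ≤ S) :
    ∃ a b : ℕ → ℕ, Tendsto a atTop atTop ∧ Tendsto b atTop atTop ∧
      (fun k => u (a k)) ~[atTop] T ∧ (fun k => u (b k)) ~[atTop] S ∧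
      ∀ᶠ k in atTop, ∀ n ∈ Ioc (a k) (b k), T k ≤ u n ∧ u n < S k := by
  have hcross : ∀ᶠ k in atTop, ∃ ab : ℕ × ℕ,
      (u ab.1 < T k ∧ ∀ n, ab.1 < n → T k ≤ u n) ∧
      (∀ n ≤ ab.2, u n < S k) ∧ S k ≤ u (ab.2 + 1) := by
    filter_upwards [hT.eventually_gt_atTop (u 0)] with k hk
    obtain ⟨a, ha⟩ := exists_lt_forall_lt_le hk (hu.eventually_ge_atTop (T k))
    obtain ⟨b, hb⟩ := exists_forall_le_lt_le_succ (hk.trans_le (hTS k))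
      (hu.eventually_ge_atTop (S k)).exists
    exact ⟨(a, b), ha, hb⟩
  obtain ⟨ab, hab⟩ := hcross.choice
  have hcrossing : ∀ {c : ℕ → ℕ} {R : ℕ → ℝ}, Tendsto R atTop atTop →
      (∀ᶠ k in atTop, u (c k) < R k ∧ R k ≤ u (c k + 1)) →
      Tendsto c atTop atTop ∧ (fun k => u (c k)) ~[atTop] R := by
    intro c R hR hc
    have hc_top : Tendsto c atTop atTop :=
      tendsto_atTop_of_tendsto_comp (u := fun n => u (n + 1))
        (tendsto_atTop_mono' _ (hc.mono fun _ h => h.2) hR)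
    exact ⟨hc_top, (hsucc.comp_tendsto hc_top).symm.of_le_of_le
      ((hu.comp hc_top).eventually_gt_atTop 0) (hc.mono fun _ h => h.1.le)
      (hc.mono fun _ h => h.2)⟩
  obtain ⟨ha, hua⟩ := hcrossing hT
    (hab.mono fun k h => ⟨h.1.1, h.1.2 _ (Nat.lt_succ_self _)⟩)
  obtain ⟨hb, hub⟩ := hcrossing (tendsto_atTop_mono hTS hT)
    (hab.mono fun k h => ⟨h.2.1 _ le_rfl, h.2.2⟩)
  refine ⟨fun k => (ab k).1, fun k => (ab k).2, ha, hb, hua, hub, ?_⟩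
  filter_upwards [hab] with k h n hn
  exact ⟨h.1.2 n (mem_Ioc.1 hn).1, h.2.1 n (mem_Ioc.1 hn).2⟩

theorem card_filter_Icc_eq_add {P : ℕ → Prop} [DecidablePred P] {a b : ℕ} (hab : a ≤ b)
    (hP : ∀ n ∈ Ioc a b, P n) :
    #{n ∈ Icc 1 b | P n} = #{n ∈ Icc 1 a | P n} + (b - a) := by
  rw [← zero_add 1, Icc_add_one_left_eq_Ioc, Icc_add_one_left_eq_Ioc,
    ← Ioc_union_Ioc_eq_Ioc (Nat.zero_le a) hab,
    filter_union, card_union_of_disjoint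
      (disjoint_filter_filter (Ioc_disjoint_Ioc_of_le le_rfl)),
    filter_true_of_mem hP, Nat.card_Ioc]

theorem eq_one_of_tendsto_card_filter_Icc_div {P : ℕ → Prop} [DecidablePred P] {α t : ℝ}
    (hP : Tendsto (fun n : ℕ => (#{m ∈ Icc 1 n | P m} : ℝ) / n) atTop (𝓝 α))
    {a b : ℕ → ℕ} (ha : Tendsto a atTop atTop) (hb : Tendsto b atTop atTop)
    (hab : Tendsto (fun k => (a k : ℝ) / b k) atTop (𝓝 t)) (ht : t < 1)
    (hblock : ∀ᶠ k in atTop, ∀ n ∈ Ioc (a k) (b k), P n) : α = 1 := by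
  set c := fun n : ℕ => (#{m ∈ Icc 1 n | P m} : ℝ) / n
  have hsplit : ∀ᶠ k in atTop, c (b k) = c (a k) * (a k / b k) + (1 - a k / b k) := by
    filter_upwards [hblock, ha.eventually_gt_atTop 0, hb.eventually_gt_atTop 0,
      hab.eventually_lt_const ht] with k hk ha0 hb0 hlt
    have hb0' : (0 : ℝ) < b k := by exact_mod_cast hb0
    have hab' : a k ≤ b k := by exact_mod_cast ((div_lt_one hb0').1 hlt).le
    simp only [c, card_filter_Icc_eq_add hab' hk]
    push_cast [hab']
    field_simp
  have hlim : Tendsto (fun k => c (b k)) atTop (𝓝 (α * t + (1 - t))) :=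
    ((hP.comp ha).mul hab).add (tendsto_const_nhds.sub hab)
      |>.congr' (hsplit.mono fun _ h => h.symm)
  have hα : α = α * t + (1 - t) := tendsto_nhds_unique (hP.comp hb) hlim
  have hfactor : (α - 1) * (1 - t) = 0 := by linarith
  rcases mul_eq_zero.1 hfactor with h | h <;> linarith

theorem tendsto_div_of_isEquivalent_const_mul_pow {u : ℕ → ℝ} {A c : ℝ} {d : ℕ}
    (hA : A ≠ 0) (hd : d ≠ 0) (hu : u ~[atTop] fun n => A * (n : ℝ) ^ d) {a b : ℕ → ℕ}
    (ha : Tendsto a atTop atTop) (hb : Tendsto b atTop atTop) {T S : ℕ → ℝ}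
    (hua : (fun k => u (a k)) ~[atTop] T) (hub : (fun k => u (b k)) ~[atTop] S)
    (hTS : Tendsto (T / S) atTop (𝓝 c)) :
    Tendsto (fun k => (a k : ℝ) / b k) atTop (𝓝 (c ^ (d⁻¹ : ℝ))) := by
  have hpow : Tendsto (fun k => ((a k : ℝ) / b k) ^ d) atTop (𝓝 c) := by
    refine (((hu.comp_tendsto ha).symm.trans hua).div
      ((hu.comp_tendsto hb).symm.trans hub)).symm.tendsto_nhds hTS |>.congr' ?_
    filter_upwards [hb.eventually_gt_atTop 0] with k hk
    simp only [Function.comp_apply, Pi.div_apply, div_pow]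
    field_simp
  exact (hpow.rpow_const (p := (d⁻¹ : ℝ)) (Or.inr (by positivity))).congr fun k =>
    Real.pow_rpow_inv_natCast (by positivity) hd

theorem stmt18_general (f : Polynomial ℝ) (hd : 1 ≤ f.natDegree) (hc : 0 < f.leadingCoeff)
    (F : ℕ → ℕ) (hF : ∀ n : ℕ, (F n : ℝ) = f.eval (n : ℝ)) :
    ¬ (∀ a b : ℝ, 0 ≤ a → a < b → b ≤ 1 →
        Tendsto (fun N : ℕ => (((Finset.Icc 1 N).filter
            (fun n => Int.fract (Real.log (F n) / Real.log 10) ∈ Set.Ico a b)).card : ℝ) / N)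
          atTop (nhds (b - a))) := by
  intro H
  have hequiv : (fun n : ℕ => (F n : ℝ)) ~[atTop]
      fun n => f.leadingCoeff * (n : ℝ) ^ f.natDegree := by
    simpa only [Function.comp_def, hF] using
      f.isEquivalent_atTop_lead.comp_tendsto tendsto_natCast_atTop_atTop
  have htop : Tendsto (fun n : ℕ => (F n : ℝ)) atTop atTop := by
    simpa only [Function.comp_def, hF] using (f.tendsto_atTop_of_leadingCoeff_nonneg
      (Polynomial.natDegree_pos_iff_degree_pos.1 hd) hc.le).comp tendsto_natCast_atTop_atTop
  have hsucc : (fun n : ℕ => (F (n + 1) : ℝ)) ~[atTop] fun n => (F n : ℝ) := by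
    simpa only [Function.comp_def, hF, Nat.cast_succ] using
      (f.isEquivalent_atTop_eval_add 1).comp_tendsto tendsto_natCast_atTop_atTop
  have hT : Tendsto (fun k : ℕ => (10 : ℝ) ^ (k : ℝ)) atTop atTop := by
    simpa using tendsto_pow_atTop_atTop_of_one_lt (by norm_num : (1 : ℝ) < 10)
  obtain ⟨a, b, ha, hb, hua, hub, hblock⟩ := exists_blocks htop hsucc hT
    (S := fun k => (10 : ℝ) ^ ((k : ℝ) + 1 / 2))
    fun k => Real.rpow_le_rpow_of_exponent_le (by norm_num) (by linarith)
  have hTS : Tendsto (fun k : ℕ => (10 : ℝ) ^ (k : ℝ) / 10 ^ ((k : ℝ) + 1 / 2)) atTop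
      (𝓝 ((10 : ℝ) ^ (-(1 / 2) : ℝ))) := by
    refine tendsto_const_nhds.congr fun k => ?_
    rw [← Real.rpow_sub (by norm_num)]
    ring_nf
  have hab := tendsto_div_of_isEquivalent_const_mul_pow hc.ne' (by omega) hequiv ha hb hua hub
    hTS
  have hα := eq_one_of_tendsto_card_filter_Icc_div
    (H 0 (1 / 2) le_rfl (by norm_num) (by norm_num)) ha hb hab (Real.rpow_lt_one (by positivity)
      (Real.rpow_lt_one_of_one_lt_of_neg (by norm_num) (by norm_num)) (by positivity))
    (hblock.mono fun k hk n hn => Int.fract_logb_mem_Ico (k := k) (by norm_num) (by norm_num)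
      (by exact_mod_cast (hk n hn).1) (by exact_mod_cast (hk n hn).2))
  norm_num at hα

/-- For any non-constant polynomial `F : ℕ → ℕ` (degree `d ≥ 1`, positive
leading coefficient, positive values), the sequence `(F n)` is not a strong
Benford sequence: `(log₁₀ (F n))` is not uniformly distributed modulo 1. -/
theorem stmt18 (f : Polynomial ℝ) (hd : 1 ≤ f.natDegree) (hc : 0 < f.leadingCoeff)
    (F : ℕ → ℕ) (hF : ∀ n : ℕ, (F n : ℝ) = f.eval (n : ℝ)) (hpos : ∀ n, 0 < F n) :
    ¬ (∀ a b : ℝ, 0 ≤ a → a < b → b ≤ 1 →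
        Tendsto (fun N : ℕ => (((Finset.Icc 1 N).filter
            (fun n => Int.fract (Real.log (F n) / Real.log 10) ∈ Set.Ico a b)).card : ℝ) / N)
          atTop (nhds (b - a))) :=
  stmt18_general f hd hc F hF
end
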